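/- In O_{2n+1}(R) over a commutative ring R, for i ≠ ±j in Θ_hb and x, y ∈ R: [T_{ij}(x), T_j(y)] = T_{j,−i}(−xy²) T_i(xy). -/

import Mathlib

/-!
Since `i ≠ ±j` and `i, j ≠ 0`, the five indices `i, j, −i, −j, 0` are pairwise distinct, so
every product `e^{ab} e^{cd} = δ_{bc} e^{ad}` of matrix units occurring in `T_{ij}(±x)` and
`T_j(±y)` is decided by comparing positions (`−a` sits at position `2n − a`). In particular
`T_{ij}(x)⁻¹ = T_{ij}(−x)` and `T_j(y)⁻¹ = T_j(−y)`, and the commutator expands to a linear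
combination of matrix units whose coefficients are polynomials in `x, y`; comparing
coefficients with the right-hand side is a ring identity.
-/

open Matrix

/-- The index of the coordinate `0` in the indexing `(1, …, n, 0, -n, …, -1)` of `R^{2n+1}`. -/
def ctr (n : ℕ) : Fin (2 * n + 1) := ⟨n, by omega⟩

/-- The short root matrix `T_{ij}(x) = e + x e^{ij} − x e^{−j,−i}`. -/
def shortRoot (n : ℕ) {R : Type*} [CommRing R] (i j : Fin (2 * n + 1)) (x : R) :
    Matrix (Fin (2 * n + 1)) (Fin (2 * n + 1)) R :=
  1 + Matrix.single i j x - Matrix.single j.rev i.rev x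

/-- The extra short root matrix `T_i(x) = e + x e^{0,−i} − 2x e^{i0} − x² e^{i,−i}`. -/
def extraShortRoot (n : ℕ) {R : Type*} [CommRing R] (i : Fin (2 * n + 1)) (x : R) :
    Matrix (Fin (2 * n + 1)) (Fin (2 * n + 1)) R :=
  1 + Matrix.single (ctr n) i.rev x - Matrix.single i (ctr n) (2 * x)
    - Matrix.single i i.rev (x ^ 2)

@[simp]
theorem val_ctr (n : ℕ) : (ctr n : ℕ) = n := rfl

-- Turns `single a b c` into `c • e^{ab}`, so that `module` can compare coefficients.
theorem Matrix.single_eq_smul_stdBasis {m n R : Type*} [Fintype m] [Fintype n] [DecidableEq m]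
    [DecidableEq n] [Semiring R] (i : m) (j : n) (c : R) :
    single i j c = c • stdBasis R m n (i, j) := by
  rw [stdBasis_eq_single, smul_single, smul_eq_mul, mul_one]

section

variable (n : ℕ) {R : Type*} [CommRing R]

theorem shortRoot_mul_shortRoot_neg (i j : Fin (2 * n + 1)) (hi : i ≠ ctr n) (hj : j ≠ ctr n)
    (hij : i ≠ j) (x : R) : shortRoot n i j x * shortRoot n i j (-x) = 1 := by
  simp (disch := simp only [ne_eq, Fin.ext_iff, Fin.val_rev, val_ctr] at *; omega) only
    [shortRoot, mul_add, add_mul, mul_sub, sub_mul, one_mul, mul_one, single_mul_single_of_ne]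
  simp only [single_eq_smul_stdBasis]
  module

theorem inv_shortRoot (i j : Fin (2 * n + 1)) (hi : i ≠ ctr n) (hj : j ≠ ctr n) (hij : i ≠ j)
    (x : R) : (shortRoot n i j x)⁻¹ = shortRoot n i j (-x) :=
  inv_eq_right_inv (shortRoot_mul_shortRoot_neg n i j hi hj hij x)

theorem extraShortRoot_mul_extraShortRoot_neg (j : Fin (2 * n + 1)) (hj : j ≠ ctr n) (y : R) :
    extraShortRoot n j y * extraShortRoot n j (-y) = 1 := by
  simp (disch := simp only [ne_eq, Fin.ext_iff, Fin.val_rev, val_ctr] at *; omega) only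
    [extraShortRoot, mul_add, add_mul, mul_sub, sub_mul, one_mul, mul_one, single_mul_single_same,
      single_mul_single_of_ne]
  simp only [single_eq_smul_stdBasis]
  module

theorem inv_extraShortRoot (j : Fin (2 * n + 1)) (hj : j ≠ ctr n) (y : R) :
    (extraShortRoot n j y)⁻¹ = extraShortRoot n j (-y) :=
  inv_eq_right_inv (extraShortRoot_mul_extraShortRoot_neg n j hj y)

end

/-- Relation (SE2): `[T_{ij}(x), T_j(y)] = T_{j,−i}(−xy²) T_i(xy)` for `i ≠ ±j`. -/
theorem shortRoot_extraShortRoot_commutator (n : ℕ) {R : Type*} [CommRing R]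
    (i j : Fin (2 * n + 1)) (hi : i ≠ ctr n) (hj : j ≠ ctr n)
    (hij : i ≠ j) (hij' : i ≠ j.rev) (x y : R) :
    shortRoot n i j x * extraShortRoot n j y * (shortRoot n i j x)⁻¹ *
        (extraShortRoot n j y)⁻¹ =
      shortRoot n j i.rev (-(x * y ^ 2)) * extraShortRoot n i (x * y) := by
  rw [inv_shortRoot n i j hi hj hij, inv_extraShortRoot n j hj]
  simp (disch := simp only [ne_eq, Fin.ext_iff, Fin.val_rev, val_ctr] at *; omega) only
    [shortRoot, extraShortRoot, Fin.rev_rev, mul_add, add_mul, mul_sub, sub_mul, one_mul,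
      mul_one, zero_mul, single_mul_single_same, single_mul_single_of_ne]
  simp only [single_eq_smul_stdBasis]
  module
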